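/- arXiv:1503.02707 — 3 statements merged into one kernel-verified Lean document; each statement's English description precedes it below -/
import Mathlib

section
/- Let X be a fuzzy Riesz space with fuzzy order μ. If a net (x_α)_{α∈A} converges in fuzzy order to x, a net (y_β)_{β∈B} converges in fuzzy order to y, and a, b are real numbers, then the net (a·x_α + b·y_β) indexed by the product directed set A×B converges in fuzzy order to a·x + b·y. -/
/-- A fuzzy Riesz space structure on a real vector space `X`:
a fuzzy order `μ : X × X → [0,1]` compatible with the vector structure,
together with binary suprema and infima with respect to the fuzzy order. -/
structure FuzzyRiesz (X : Type*) [AddCommGroup X] [Module ℝ X] where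
  μ : X → X → ℝ
  nonneg : ∀ x y : X, 0 ≤ μ x y
  le_one : ∀ x y : X, μ x y ≤ 1
  refl : ∀ x : X, μ x x = 1
  antisymm : ∀ x y : X, 1 < μ x y + μ y x → x = y
  trans : ∀ x y z : X, min (μ x y) (μ y z) ≤ μ x z
  add_compat : ∀ x y z : X, 1/2 < μ x y → μ x y ≤ μ (x + z) (y + z)
  smul_compat : ∀ (x y : X) (c : ℝ), 0 ≤ c → 1/2 < μ x y → μ x y ≤ μ (c • x) (c • y)
  sup : X → X → X
  inf : X → X → X
  le_sup_left : ∀ x y : X, 1/2 < μ x (sup x y)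
  le_sup_right : ∀ x y : X, 1/2 < μ y (sup x y)
  sup_le : ∀ x y z : X, 1/2 < μ x z → 1/2 < μ y z → 1/2 < μ (sup x y) z
  inf_le_left : ∀ x y : X, 1/2 < μ (inf x y) x
  inf_le_right : ∀ x y : X, 1/2 < μ (inf x y) y
  le_inf : ∀ x y z : X, 1/2 < μ z x → 1/2 < μ z y → 1/2 < μ z (inf x y)

namespace FuzzyRiesz

universe v

variable {X : Type*} [AddCommGroup X] [Module ℝ X]

/-- The absolute value `|x| = x ∨ (−x)`. -/
def fabs (F : FuzzyRiesz X) (x : X) : X := F.sup x (-x)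

/-- `x` is positive: `μ(0,x) > 1/2`. -/
def Pos (F : FuzzyRiesz X) (x : X) : Prop := 1/2 < F.μ 0 x

/-- `S⁺`, the set of positive elements of `S`. -/
def posPart (F : FuzzyRiesz X) (S : Set X) : Set X := {x ∈ S | F.Pos x}

/-- `y` is an upper bound of `A`. -/
def UpperBound (F : FuzzyRiesz X) (A : Set X) (y : X) : Prop := ∀ x ∈ A, 1/2 < F.μ x y

/-- `y` is a lower bound of `A`. -/
def LowerBound (F : FuzzyRiesz X) (A : Set X) (y : X) : Prop := ∀ x ∈ A, 1/2 < F.μ y x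

/-- `z = sup A` in the fuzzy order. -/
def IsSup (F : FuzzyRiesz X) (A : Set X) (z : X) : Prop :=
  F.UpperBound A z ∧ ∀ y : X, F.UpperBound A y → 1/2 < F.μ z y

/-- `z = inf A` in the fuzzy order. -/
def IsInf (F : FuzzyRiesz X) (A : Set X) (z : X) : Prop :=
  F.LowerBound A z ∧ ∀ y : X, F.LowerBound A y → 1/2 < F.μ y z

/-- `z = inf A`, computed relative to the subset `Y` (lower bounds taken in `Y`). -/
def IsInfIn (F : FuzzyRiesz X) (Y A : Set X) (z : X) : Prop :=
  F.LowerBound A z ∧ ∀ y ∈ Y, F.LowerBound A y → 1/2 < F.μ y z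

/-- A set is fuzzy solid if `μ(|x|,|y|) > 1/2` and `y ∈ A` imply `x ∈ A`. -/
def Solid (F : FuzzyRiesz X) (A : Set X) : Prop :=
  ∀ x y : X, 1/2 < F.μ (F.fabs x) (F.fabs y) → y ∈ A → x ∈ A

/-- A fuzzy ideal: a fuzzy solid vector subspace. -/
structure IsIdeal (F : FuzzyRiesz X) (I : Set X) : Prop where
  zero_mem : (0 : X) ∈ I
  add_mem : ∀ {x y : X}, x ∈ I → y ∈ I → x + y ∈ I
  smul_mem : ∀ (c : ℝ) {x : X}, x ∈ I → c • x ∈ I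
  solid : ∀ x y : X, 1/2 < F.μ (F.fabs x) (F.fabs y) → y ∈ I → x ∈ I

/-- A fuzzy ideal of the subspace `Y` (with the restricted fuzzy order and
vector structure): a vector subspace of `Y` that is solid relative to `Y`. -/
structure IsIdealIn (F : FuzzyRiesz X) (Y I : Set X) : Prop where
  subset : I ⊆ Y
  zero_mem : (0 : X) ∈ I
  add_mem : ∀ {x y : X}, x ∈ I → y ∈ I → x + y ∈ I
  smul_mem : ∀ (c : ℝ) {x : X}, x ∈ I → c • x ∈ I
  solid : ∀ x ∈ Y, ∀ y ∈ I, 1/2 < F.μ (F.fabs x) (F.fabs y) → x ∈ I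

/-- A decreasing net. -/
def Decreasing (F : FuzzyRiesz X) {ι : Type v} [Preorder ι] (y : ι → X) : Prop :=
  ∀ a b : ι, a ≤ b → 1/2 < F.μ (y b) (y a)

/-- An increasing net. -/
def Increasing (F : FuzzyRiesz X) {ι : Type v} [Preorder ι] (x : ι → X) : Prop :=
  ∀ a b : ι, a ≤ b → 1/2 < F.μ (x a) (x b)

/-- The net `x` converges in fuzzy order to `l`: there is a net `y` over the same
index set with `μ(|x_α − l|, y_α) > 1/2` for all `α` and `y_α ↓ 0`. -/
def FuzzyOrderConv (F : FuzzyRiesz X) {ι : Type v} [Preorder ι] (x : ι → X) (l : X) : Prop :=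
  ∃ y : ι → X, (∀ a, 1/2 < F.μ (F.fabs (x a - l)) (y a)) ∧ F.Decreasing y ∧
    F.IsInf (Set.range y) 0

/-- Fuzzy order convergence relative to the subset `Y` (the dominating net lies in `Y`
and its infimum is computed in `Y`). -/
def FuzzyOrderConvIn (F : FuzzyRiesz X) (Y : Set X) {ι : Type v} [Preorder ι]
    (x : ι → X) (l : X) : Prop :=
  ∃ y : ι → X, (∀ a, y a ∈ Y) ∧ (∀ a, 1/2 < F.μ (F.fabs (x a - l)) (y a)) ∧ F.Decreasing y ∧
    F.IsInfIn Y (Set.range y) 0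

/-- `S` is fuzzy σ-order closed: closed under fuzzy order limits of sequences in `S`. -/
def SigmaOrderClosed (F : FuzzyRiesz X) (S : Set X) : Prop :=
  ∀ (x : ℕ → X) (l : X), (∀ n, x n ∈ S) → F.FuzzyOrderConv x l → l ∈ S

/-- `S` is fuzzy order closed: closed under fuzzy order limits of nets in `S`. -/
def OrderClosed (F : FuzzyRiesz X) (S : Set X) : Prop :=
  ∀ (ι : Type v) [Preorder ι] [Nonempty ι] [IsDirected ι (· ≤ ·)],
    ∀ (x : ι → X) (l : X), (∀ a, x a ∈ S) → F.FuzzyOrderConv x l → l ∈ S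

/-- `S` is fuzzy order closed in the subspace `Y`. -/
def OrderClosedIn (F : FuzzyRiesz X) (Y S : Set X) : Prop :=
  ∀ (ι : Type v) [Preorder ι] [Nonempty ι] [IsDirected ι (· ≤ ·)],
    ∀ (x : ι → X) (l : X), (∀ a, x a ∈ S) → l ∈ Y → F.FuzzyOrderConvIn Y x l → l ∈ S

/-- A fuzzy band: a fuzzy order closed fuzzy ideal. -/
def IsBand (F : FuzzyRiesz X) (B : Set X) : Prop := F.IsIdeal B ∧ OrderClosed.{v} F B

/-- A fuzzy band of the subspace `Y`. -/
def IsBandIn (F : FuzzyRiesz X) (Y B : Set X) : Prop := F.IsIdealIn Y B ∧ OrderClosedIn.{v} F Y B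

/-- The disjoint complement `A^d = {x : |x| ∧ |y| = 0 for all y ∈ A}`. -/
def dcomp (F : FuzzyRiesz X) (A : Set X) : Set X :=
  {x : X | ∀ y ∈ A, F.inf (F.fabs x) (F.fabs y) = 0}

/-- The algebraic sum of two subsets. -/
def sumSet (A B : Set X) : Set X := {z : X | ∃ a ∈ A, ∃ b ∈ B, z = a + b}

/-- `S` is fuzzy order dense in `X`. -/
def OrderDense (F : FuzzyRiesz X) (S : Set X) : Prop :=
  ∀ x : X, x ≠ 0 → F.Pos x → ∃ y ∈ S, y ≠ 0 ∧ 1/2 < F.μ y x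

/-- `S` is fuzzy order dense in the subspace `Y`. -/
def OrderDenseIn (F : FuzzyRiesz X) (Y S : Set X) : Prop :=
  ∀ x ∈ Y, x ≠ 0 → F.Pos x → ∃ y ∈ S, y ≠ 0 ∧ 1/2 < F.μ y x

/-- `x` is nonnegative: it is not the case that `μ(x,0) > 1/2`. -/
def Nonneg (F : FuzzyRiesz X) (x : X) : Prop := ¬ (1/2 < F.μ x 0)

/-- `X` is fuzzy Archimedean: for every nonzero nonnegative `x`, the set
`{λ • x : λ > 0}` has no upper bound. -/
def FuzzyArchimedean (F : FuzzyRiesz X) : Prop :=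
  ∀ x : X, x ≠ 0 → F.Nonneg x →
    ¬ ∃ y : X, F.UpperBound {z : X | ∃ c : ℝ, 0 < c ∧ z = c • x} y

/-- `X` is fuzzy Dedekind complete. -/
def DedekindComplete (F : FuzzyRiesz X) : Prop :=
  ∀ A : Set X, A.Nonempty → (∃ y, F.UpperBound A y) → ∃ z, F.IsSup A z

/-- `X` is fuzzy Dedekind σ-complete. -/
def DedekindSigmaComplete (F : FuzzyRiesz X) : Prop :=
  ∀ A : Set X, A.Nonempty → A.Countable →
    ((∃ y, F.UpperBound A y) → ∃ z, F.IsSup A z) ∧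
    ((∃ y, F.LowerBound A y) → ∃ z, F.IsInf A z)

/-- `D` is directed to the right. -/
def DirectedRight (F : FuzzyRiesz X) (D : Set X) : Prop :=
  ∀ E : Set X, E ⊆ D → E.Finite → ∃ d ∈ D, ∀ e ∈ E, 1/2 < F.μ e d

/-- `B` is a fuzzy projection band: a fuzzy band such that every `x ∈ X` decomposes
uniquely as `x = x₁ + x₂` with `x₁ ∈ B`, `x₂ ∈ B^d`. -/
def IsProjBand (F : FuzzyRiesz X) (B : Set X) : Prop :=
  IsBand.{v} F B ∧ ∀ x : X, ∃! p : X × X, p.1 ∈ B ∧ p.2 ∈ F.dcomp B ∧ x = p.1 + p.2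

/-- There is an increasing net of elements of `S`, over some nonempty directed
preordered index set, whose supremum is `l`. -/
def IncNetSup (F : FuzzyRiesz X) (S : Set X) (l : X) : Prop :=
  ∃ (ι : Type v) (r : ι → ι → Prop), Nonempty ι ∧ (∀ a, r a a) ∧
    (∀ a b c, r a b → r b c → r a c) ∧ (∀ a b, ∃ c, r a c ∧ r b c) ∧
    ∃ net : ι → X, (∀ a, net a ∈ S) ∧ (∀ a b, r a b → 1/2 < F.μ (net a) (net b)) ∧
      F.IsSup (Set.range net) l

end FuzzyRiesz

universe u w

/-! If `|x_α - x| ≤ u_α ↓ 0` and `|y_β - y| ≤ v_β ↓ 0`, then `|a x_α + b y_β - (a x + b y)|` is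
dominated by `c (u_α + v_β)` with `c = |a| + |b| + 1`. The constant is taken strictly positive
because scaling by `c > 0` is an order automorphism and hence preserves the infimum
`inf (u_α + v_β) = 0`. -/

notation:50 x:51 " ≤[" F "] " y:51 => 1/2 < FuzzyRiesz.μ F x y

namespace FuzzyRiesz

variable {X : Type*} [AddCommGroup X] [Module ℝ X] {F : FuzzyRiesz X}

theorem le_trans {x y z : X} (hxy : x ≤[F] y) (hyz : y ≤[F] z) : x ≤[F] z :=
  (lt_min hxy hyz).trans_le (F.trans x y z)

theorem add_le_add_right {x y : X} (h : x ≤[F] y) (z : X) : x + z ≤[F] y + z :=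
  h.trans_le (F.add_compat x y z h)

theorem add_le_add_iff_right {x y : X} (z : X) : x + z ≤[F] y + z ↔ x ≤[F] y :=
  ⟨fun h => by simpa using add_le_add_right h (-z), fun h => add_le_add_right h z⟩

theorem sub_le_iff_le_add {x y z : X} : x - z ≤[F] y ↔ x ≤[F] y + z := by
  rw [← add_le_add_iff_right z, sub_add_cancel]

theorem sub_le_iff_le_add' {x y z : X} : x - z ≤[F] y ↔ x ≤[F] z + y := by
  rw [sub_le_iff_le_add, add_comm]

theorem add_le_add {x y z w : X} (hxy : x ≤[F] y) (hzw : z ≤[F] w) : x + z ≤[F] y + w :=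
  le_trans (add_le_add_right hxy z) (by simpa only [add_comm y] using add_le_add_right hzw y)

theorem smul_le_smul {x y : X} {c : ℝ} (hc : 0 ≤ c) (h : x ≤[F] y) : c • x ≤[F] c • y :=
  h.trans_le (F.smul_compat x y c hc h)

theorem smul_le_smul_iff_of_pos {x y : X} {c : ℝ} (hc : 0 < c) : c • x ≤[F] c • y ↔ x ≤[F] y :=
  ⟨fun h => by simpa [smul_smul, hc.ne'] using smul_le_smul (inv_nonneg.2 hc.le) h,
    smul_le_smul hc.le⟩

theorem smul_le_smul_of_le_left {x : X} {c d : ℝ} (hx : 0 ≤[F] x) (hcd : c ≤ d) :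
    c • x ≤[F] d • x := by
  have h := add_le_add_right (smul_le_smul (sub_nonneg.2 hcd) hx) (c • x)
  rwa [smul_zero, zero_add, ← add_smul, sub_add_cancel] at h

theorem fabs_add_le (x y : X) : F.fabs (x + y) ≤[F] F.fabs x + F.fabs y := by
  apply F.sup_le
  · exact add_le_add (F.le_sup_left x (-x)) (F.le_sup_left y (-y))
  · rw [neg_add]
    exact add_le_add (F.le_sup_right x (-x)) (F.le_sup_right y (-y))

theorem fabs_smul_le (c : ℝ) (x : X) : F.fabs (c • x) ≤[F] |c| • F.fabs x := by
  rcases le_or_gt 0 c with hc | hc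
  · rw [abs_of_nonneg hc]
    apply F.sup_le
    · exact smul_le_smul hc (F.le_sup_left x (-x))
    · rw [← smul_neg]
      exact smul_le_smul hc (F.le_sup_right x (-x))
  · rw [abs_of_neg hc]
    apply F.sup_le
    · rw [← neg_smul_neg]
      exact smul_le_smul (neg_nonneg.2 hc.le) (F.le_sup_right x (-x))
    · rw [← neg_smul]
      exact smul_le_smul (neg_nonneg.2 hc.le) (F.le_sup_left x (-x))

theorem fabs_smul_le_smul {x u : X} {c d : ℝ} (hxu : F.fabs x ≤[F] u) (hu : 0 ≤[F] u)
    (hcd : |c| ≤ d) : F.fabs (c • x) ≤[F] d • u :=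
  le_trans (fabs_smul_le c x)
    (le_trans (smul_le_smul (abs_nonneg c) hxu) (smul_le_smul_of_le_left hu hcd))

section Nets

variable {ι κ : Type*} {u : ι → X} {v : κ → X}

theorem isInf_range_smul {l : X} (hu : F.IsInf (Set.range u) l) {c : ℝ} (hc : 0 < c) :
    F.IsInf (Set.range fun i => c • u i) (c • l) := by
  refine ⟨?_, fun z hz => ?_⟩
  · rintro _ ⟨i, rfl⟩
    exact smul_le_smul hc.le (hu.1 _ (Set.mem_range_self i))
  · have hz' : F.LowerBound (Set.range u) (c⁻¹ • z) := by
      rintro _ ⟨i, rfl⟩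
      rw [← smul_le_smul_iff_of_pos hc, smul_inv_smul₀ hc.ne']
      exact hz _ (Set.mem_range_self i)
    simpa [hc.ne'] using smul_le_smul hc.le (hu.2 _ hz')

theorem isInf_range_add {l m : X} (hu : F.IsInf (Set.range u) l) (hv : F.IsInf (Set.range v) m) :
    F.IsInf (Set.range fun p : ι × κ => u p.1 + v p.2) (l + m) := by
  refine ⟨?_, fun z hz => ?_⟩
  · rintro _ ⟨p, rfl⟩
    exact add_le_add (hu.1 _ (Set.mem_range_self p.1)) (hv.1 _ (Set.mem_range_self p.2))
  · have hz_sub_le : ∀ j, z - l ≤[F] v j := by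
      intro j
      have hlb : F.LowerBound (Set.range u) (z - v j) := by
        rintro _ ⟨i, rfl⟩
        exact sub_le_iff_le_add.2 (hz _ ⟨(i, j), rfl⟩)
      exact sub_le_iff_le_add'.2 (sub_le_iff_le_add.1 (hu.2 _ hlb))
    exact sub_le_iff_le_add'.1 (hv.2 _ (by rintro _ ⟨j, rfl⟩; exact hz_sub_le j))

variable [Preorder ι] [Preorder κ]

theorem Decreasing.smul (hu : F.Decreasing u) {c : ℝ} (hc : 0 ≤ c) :
    F.Decreasing (fun i => c • u i) :=
  fun i j hij => smul_le_smul hc (hu i j hij)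

theorem Decreasing.add_prod (hu : F.Decreasing u) (hv : F.Decreasing v) :
    F.Decreasing (fun p : ι × κ => u p.1 + v p.2) :=
  fun p q hpq => add_le_add (hu p.1 q.1 hpq.1) (hv p.2 q.2 hpq.2)

end Nets

end FuzzyRiesz

open FuzzyRiesz in
theorem fuzzyOrderConv_smul_add_general {X : Type*} [AddCommGroup X] [Module ℝ X]
    (F : FuzzyRiesz X) {A : Type u} {B : Type w} [Preorder A] [Preorder B]
    (x : A → X) (y : B → X) (xl yl : X) (a b : ℝ)
    (hx : F.FuzzyOrderConv x xl) (hy : F.FuzzyOrderConv y yl) :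
    F.FuzzyOrderConv (fun p : A × B => a • x p.1 + b • y p.2) (a • xl + b • yl) := by
  obtain ⟨u, hxu, hu_dec, hu_inf⟩ := hx
  obtain ⟨v, hyv, hv_dec, hv_inf⟩ := hy
  set c := |a| + |b| + 1
  have hc : 0 < c := by positivity
  refine ⟨fun p => c • (u p.1 + v p.2), fun p => ?_, (hu_dec.add_prod hv_dec).smul hc.le, ?_⟩
  · have hsplit : a • x p.1 + b • y p.2 - (a • xl + b • yl)
        = a • (x p.1 - xl) + b • (y p.2 - yl) := by
      simp only [smul_sub]; abel
    dsimp only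
    rw [hsplit, smul_add]
    refine le_trans (fabs_add_le _ _) (add_le_add ?_ ?_)
    · exact fabs_smul_le_smul (hxu p.1) (hu_inf.1 _ (Set.mem_range_self _))
        (by linarith [abs_nonneg b])
    · exact fabs_smul_le_smul (hyv p.2) (hv_inf.1 _ (Set.mem_range_self _))
        (by linarith [abs_nonneg a])
  · simpa only [add_zero, smul_zero] using isInf_range_smul (isInf_range_add hu_inf hv_inf) hc

/-- If `x_α → xl` and `y_β → yl` in fuzzy order, then the net
`a • x_α + b • y_β` over the product directed set converges in fuzzy order
to `a • xl + b • yl`. -/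
theorem fuzzyOrderConv_smul_add {X : Type*} [AddCommGroup X] [Module ℝ X]
    (F : FuzzyRiesz X) {A : Type u} {B : Type w} [Preorder A] [Preorder B]
    [Nonempty A] [Nonempty B] [IsDirected A (· ≤ ·)] [IsDirected B (· ≤ ·)]
    (x : A → X) (y : B → X) (xl yl : X) (a b : ℝ)
    (hx : F.FuzzyOrderConv x xl) (hy : F.FuzzyOrderConv y yl) :
    F.FuzzyOrderConv (fun p : A × B => a • x p.1 + b • y p.2) (a • xl + b • yl) :=
  fuzzyOrderConv_smul_add_general F x y xl yl a b hx hy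
end

section
/- Let S be a fuzzy solid subset of a fuzzy Riesz space X. Then: (i) S is fuzzy σ-order closed if and only if for every increasing sequence (x_n) of positive elements of S with x_n ↑ x one has x ∈ S; (ii) S is fuzzy order closed if and only if for every increasing net (x_α) of positive elements of S with x_α ↑ x one has x ∈ S. -/
universe u

/-!
The relation `μ(x,y) > 1/2` turns `X` into a lattice-ordered group in which the fuzzy notions
are the classical ones, so the statement is one about solid sets of lattice-ordered groups.
An increasing net with supremum `l` converges in order to `l`, dominated by `l - x_α`.
Conversely, if `|x_α - l| ≤ y_α ↓ 0`, then the positive parts `(|l| - y_α)⁺` increase to `|l|`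
and lie below `|x_α|`, hence in `S` by solidity; so `|l| ∈ S`, and `l ∈ S` by solidity again.
-/

open Set

lemma IsLUB.range_sup_const {α ι : Type*} [SemilatticeSup α] {y : ι → α} {z c : α}
    (h : IsLUB (range y) z) (hc : c ≤ z) : IsLUB (range fun a => y a ⊔ c) z := by
  simp only [IsLUB, IsLeast, mem_upperBounds, mem_lowerBounds, forall_mem_range] at h ⊢
  exact ⟨fun a => sup_le (h.1 a) hc, fun u hu => h.2 u fun a => le_sup_left.trans (hu a)⟩

namespace LatticeOrderedAddCommGroup

variable {α ι : Type*} [Lattice α] [AddCommGroup α] [IsOrderedAddMonoid α]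

def OrderConvergesTo [Preorder ι] (x : ι → α) (l : α) : Prop :=
  ∃ y : ι → α, (∀ a, |x a - l| ≤ y a) ∧ Antitone y ∧ IsGLB (range y) 0

lemma isGLB_range_iff_isLUB_range_sub (z m : α) (y : ι → α) :
    IsGLB (range y) m ↔ IsLUB (range fun a => z - y a) (z - m) := by
  simp only [IsGLB, IsLUB, IsGreatest, IsLeast, mem_upperBounds, mem_lowerBounds,
    forall_mem_range, sub_le_sub_iff_left]
  refine and_congr_right fun _ => ⟨fun h u hu => ?_, fun h u hu => ?_⟩
  · exact sub_le_comm.mp (h (z - u) fun a => sub_le_comm.mp (hu a))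
  · simpa using sub_le_comm.mp (h (z - u) fun a => sub_le_sub_left (hu a) z)

variable [Preorder ι]

lemma orderConvergesTo_of_monotone {x : ι → α} {l : α} (hx : Monotone x)
    (hl : IsLUB (range x) l) : OrderConvergesTo x l := by
  refine ⟨fun a => l - x a, fun a => ?_, fun a b hab => sub_le_sub_left (hx hab) l, ?_⟩
  · rw [abs_sub_comm, abs_of_nonneg (sub_nonneg.mpr (hl.1 ⟨a, rfl⟩))]
  · simpa using (isGLB_range_iff_isLUB_range_sub l 0 fun a => l - x a).mpr (by simpa using hl)

lemma OrderConvergesTo.exists_monotone_isLUB_abs {x : ι → α} {l : α}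
    (hx : OrderConvergesTo x l) :
    ∃ b : ι → α, Monotone b ∧ (∀ a, 0 ≤ b a ∧ b a ≤ |x a|) ∧ IsLUB (range b) |l| := by
  obtain ⟨y, hxy, hy, hy0⟩ := hx
  refine ⟨fun a => (|l| - y a)⁺, fun a b hab => posPart_mono (sub_le_sub_left (hy hab) _),
    fun a => ⟨posPart_nonneg _, sup_le ?_ (abs_nonneg _)⟩, ?_⟩
  · calc |l| - y a ≤ |l| - |x a - l| := sub_le_sub_left (hxy a) _
      _ ≤ |x a| := sub_le_iff_le_add.mpr <| by
        simpa [abs_sub_comm] using abs_add_le (x a) (l - x a)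
  · have h := (isGLB_range_iff_isLUB_range_sub |l| 0 y).mp hy0
    rw [sub_zero] at h
    exact h.range_sup_const (abs_nonneg l)

theorem IsSolid.forall_mem_of_orderConvergesTo_iff {S : Set α} (hS : IsSolid S) :
    (∀ (x : ι → α) l, (∀ a, x a ∈ S) → OrderConvergesTo x l → l ∈ S) ↔
      ∀ (x : ι → α) l, (∀ a, x a ∈ S ∧ 0 ≤ x a) → Monotone x → IsLUB (range x) l → l ∈ S := by
  refine ⟨fun H x l hx hmono hl => ?_, fun H x l hx hconv => ?_⟩
  · exact H x l (fun a => (hx a).1) (orderConvergesTo_of_monotone hmono hl)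
  obtain ⟨b, hmono, hb, hl⟩ := hconv.exists_monotone_isLUB_abs
  have hbS : ∀ a, b a ∈ S := fun a => hS (hx a) (by rw [abs_of_nonneg (hb a).1]; exact (hb a).2)
  exact hS (H b |l| (fun a => ⟨hbS a, (hb a).1⟩) hmono hl) (abs_abs l).ge

end LatticeOrderedAddCommGroup

namespace FuzzyRiesz

variable {X : Type*} [AddCommGroup X] [Module ℝ X]

abbrev toLattice (F : FuzzyRiesz X) : Lattice X where
  le x y := 1/2 < F.μ x y
  le_refl x := by simp only [F.refl]; norm_num
  le_trans x y z hxy hyz := (lt_min hxy hyz).trans_le (F.trans x y z)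
  le_antisymm x y hxy hyx := F.antisymm x y (by linarith)
  sup := F.sup
  le_sup_left := F.le_sup_left
  le_sup_right := F.le_sup_right
  sup_le := F.sup_le
  inf := F.inf
  inf_le_left := F.inf_le_left
  inf_le_right := F.inf_le_right
  le_inf x y z := F.le_inf y z x

lemma isOrderedAddMonoid (F : FuzzyRiesz X) : letI := F.toLattice; IsOrderedAddMonoid X :=
  letI := F.toLattice
  { add_le_add_left := fun x y h z => h.trans_le (F.add_compat x y z h) }

/-- Under `F.toLattice`, every fuzzy notion below unfolds definitionally to its classical
counterpart (`F.fabs` to `|·|`, `F.IsSup` to `IsLUB`, `F.Increasing` to `Monotone`, ...). -/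
theorem Solid.forall_mem_of_fuzzyOrderConv_iff {F : FuzzyRiesz X} {ι : Type*} [Preorder ι]
    {S : Set X} (hS : F.Solid S) :
    (∀ (x : ι → X) l, (∀ a, x a ∈ S) → F.FuzzyOrderConv x l → l ∈ S) ↔
      ∀ (x : ι → X) l, (∀ a, x a ∈ S ∧ F.Pos (x a)) → F.Increasing x →
        F.IsSup (range x) l → l ∈ S :=
  letI := F.toLattice
  haveI := F.isOrderedAddMonoid
  LatticeOrderedAddCommGroup.IsSolid.forall_mem_of_orderConvergesTo_iff
    fun y hy x hxy => hS x y hxy hy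

end FuzzyRiesz

/-- for a fuzzy solid set `S`, (i) `S` is fuzzy σ-order closed iff
every increasing sequence of positive elements of `S` with supremum `l` has `l ∈ S`;
(ii) `S` is fuzzy order closed iff the same holds for increasing nets. -/
theorem solid_orderClosed_iff {X : Type*} [AddCommGroup X] [Module ℝ X]
    (F : FuzzyRiesz X) (S : Set X) (hS : F.Solid S) :
    (F.SigmaOrderClosed S ↔
      ∀ (x : ℕ → X) (l : X), (∀ n, x n ∈ S ∧ F.Pos (x n)) → F.Increasing x →
        F.IsSup (Set.range x) l → l ∈ S) ∧
    (FuzzyRiesz.OrderClosed.{u} F S ↔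
      ∀ (ι : Type u) [Preorder ι] [Nonempty ι] [IsDirected ι (· ≤ ·)] (x : ι → X) (l : X),
        (∀ a, x a ∈ S ∧ F.Pos (x a)) → F.Increasing x → F.IsSup (Set.range x) l → l ∈ S) :=
  ⟨hS.forall_mem_of_fuzzyOrderConv_iff,
    forall_congr' fun _ => forall_congr' fun _ => forall_congr' fun _ => forall_congr' fun _ =>
      hS.forall_mem_of_fuzzyOrderConv_iff⟩
end

section
/- Let D be a nonempty subset of a fuzzy Riesz space X. Then the fuzzy ideal generated by D (the smallest fuzzy ideal of X containing D) exists, is unique, and equals the set I_D = { x ∈ X : there exist x₁,…,x_n ∈ D and a real λ ≥ 0 such that μ(|x|, λ·(|x₁|+…+|x_n|)) > 1/2 }. -/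
/-- The candidate for the fuzzy ideal generated by `D`:
`{x : ∃ x₁,…,x_n ∈ D, ∃ λ ≥ 0, μ(|x|, λ(|x₁|+…+|x_n|)) > 1/2}`. -/
def genIdeal {X : Type*} [AddCommGroup X] [Module ℝ X] (F : FuzzyRiesz X) (D : Set X) :
    Set X :=
  {x : X | ∃ (n : ℕ) (f : Fin (n + 1) → X) (lam : ℝ), (∀ i, f i ∈ D) ∧ 0 ≤ lam ∧
    1/2 < F.μ (F.fabs x) (lam • ∑ i, F.fabs (f i))}

/-! The relation `μ(x, y) > 1/2` is a partial order on `X`, compatible with translations and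
nonnegative scalings, for which `F.sup` and `F.inf` are binary suprema and infima. So `X` is an
ordinary vector lattice whose absolute value is `F.fabs`, and the fuzzy ideals of `X` are exactly
its solid subspaces. In any vector lattice, the elements `x` with `|x| ≤ λ (|x₁| + ⋯ + |xₙ|)` for
some `xᵢ ∈ D` and `λ ≥ 0` form a solid subspace, by the triangle inequality and
`|c x| ≤ |c| |x|`, and a solid subspace containing `D` contains each `λ (|x₁| + ⋯ + |xₙ|)`, hence
all of them. -/

open LatticeOrderedAddCommGroup

section VectorLattice

variable {M : Type*} [Lattice M] [AddCommGroup M] [Module ℝ M] [PosSMulMono ℝ M]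

theorem abs_smul_le (c : ℝ) (x : M) : |c • x| ≤ |c| • |x| := by
  have key : ∀ {a : ℝ}, 0 ≤ a → ∀ y : M, |a • y| ≤ a • |y| := fun ha y =>
    abs_le'.2 ⟨smul_le_smul_of_nonneg_left (le_abs_self y) ha,
      by simpa [smul_neg] using smul_le_smul_of_nonneg_left (neg_le_abs y) ha⟩
  rcases le_total 0 c with hc | hc
  · simpa [abs_of_nonneg hc] using key hc x
  · simpa [abs_of_nonpos hc] using key (neg_nonneg.2 hc) (-x)

variable [IsOrderedAddMonoid M]

namespace LatticeOrderedAddCommGroup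

def solidSpan (D : Set M) : Submodule ℝ M where
  carrier := {x | ∃ (n : ℕ) (f : Fin n → M) (c : ℝ), (∀ i, f i ∈ D) ∧ 0 ≤ c ∧
    |x| ≤ c • ∑ i, |f i|}
  zero_mem' := ⟨0, Fin.elim0, 0, fun i => i.elim0, le_rfl, by simp⟩
  add_mem' := by
    rintro x y ⟨n, f, c, hf, hc, hx⟩ ⟨m, g, d, hg, -, hy⟩
    refine ⟨n + m, Fin.append f g, max c d, Fin.addCases (by simpa using hf) (by simpa using hg),
      hc.trans (le_max_left c d), ?_⟩
    calc |x + y| ≤ |x| + |y| := abs_add_le x y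
      _ ≤ c • ∑ i, |f i| + d • ∑ i, |g i| := add_le_add hx hy
      _ ≤ max c d • ∑ i, |f i| + max c d • ∑ i, |g i| := by
        gcongr
        exacts [le_max_left c d, le_max_right c d]
      _ = max c d • ∑ i, |Fin.append f g i| := by simp [Fin.sum_univ_add, smul_add]
  smul_mem' := by
    rintro a x ⟨n, f, c, hf, hc, hx⟩
    refine ⟨n, f, |a| * c, hf, mul_nonneg (abs_nonneg a) hc, ?_⟩
    calc |a • x| ≤ |a| • |x| := abs_smul_le a x
      _ ≤ |a| • c • ∑ i, |f i| := smul_le_smul_of_nonneg_left hx (abs_nonneg a)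
      _ = (|a| * c) • ∑ i, |f i| := smul_smul _ _ _

theorem mem_solidSpan {D : Set M} {x : M} :
    x ∈ solidSpan D ↔ ∃ (n : ℕ) (f : Fin n → M) (c : ℝ), (∀ i, f i ∈ D) ∧ 0 ≤ c ∧
      |x| ≤ c • ∑ i, |f i| :=
  Iff.rfl

theorem mem_solidSpan_iff_of_nonempty {D : Set M} (hD : D.Nonempty) {x : M} :
    x ∈ solidSpan D ↔ ∃ (n : ℕ) (f : Fin (n + 1) → M) (c : ℝ), (∀ i, f i ∈ D) ∧ 0 ≤ c ∧
      |x| ≤ c • ∑ i, |f i| := by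
  rw [mem_solidSpan]
  refine ⟨?_, fun ⟨n, f, c, hf, hc, hx⟩ => ⟨n + 1, f, c, hf, hc, hx⟩⟩
  rintro ⟨n, f, c, hf, hc, hx⟩
  obtain ⟨d, hd⟩ := hD
  refine ⟨n, Fin.cons d f, c, Fin.cases hd hf, hc, hx.trans ?_⟩
  rw [Fin.sum_univ_succ]
  simp only [Fin.cons_zero, Fin.cons_succ]
  exact smul_le_smul_of_nonneg_left (le_add_of_nonneg_left (abs_nonneg d)) hc

theorem isSolid_solidSpan (D : Set M) : IsSolid (solidSpan D : Set M) := by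
  rintro y hy x hxy
  obtain ⟨n, f, c, hf, hc, hy⟩ := mem_solidSpan.1 hy
  exact mem_solidSpan.2 ⟨n, f, c, hf, hc, hxy.trans hy⟩

theorem subset_solidSpan (D : Set M) : D ⊆ solidSpan D := fun x hx =>
  mem_solidSpan.2 ⟨1, fun _ => x, 1, fun _ => hx, zero_le_one, by simp⟩

theorem solidSpan_le {D : Set M} {J : Submodule ℝ M} (hJ : IsSolid (J : Set M))
    (hDJ : D ⊆ J) : solidSpan D ≤ J := by
  intro x hx
  obtain ⟨n, f, c, hf, hc, hx⟩ := mem_solidSpan.1 hx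
  have habs : ∀ {y : M}, y ∈ J → |y| ∈ J := fun hy => hJ hy (abs_abs _).le
  have hmem : c • ∑ i, |f i| ∈ J :=
    J.smul_mem c (J.sum_mem fun i _ => habs (hDJ (hf i)))
  have hnonneg : 0 ≤ c • ∑ i, |f i| := smul_nonneg hc (Finset.sum_nonneg fun i _ => abs_nonneg _)
  exact hJ hmem (by rwa [abs_of_nonneg hnonneg])

end LatticeOrderedAddCommGroup

end VectorLattice

namespace FuzzyRiesz

variable {X : Type*} [AddCommGroup X] [Module ℝ X]

/-- `X` ordered by `x ≤ y ↔ 1/2 < μ(x, y)`; its absolute value `x ⊔ -x` is `F.fabs x`. -/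
def Crisp (_F : FuzzyRiesz X) : Type _ := X

instance (F : FuzzyRiesz X) : AddCommGroup F.Crisp := inferInstanceAs (AddCommGroup X)

instance (F : FuzzyRiesz X) : Module ℝ F.Crisp := inferInstanceAs (Module ℝ X)

instance (F : FuzzyRiesz X) : Lattice F.Crisp where
  le x y := 1/2 < F.μ x y
  le_refl x := by rw [F.refl x]; norm_num
  le_trans x y z hxy hyz := (lt_min hxy hyz).trans_le (F.trans x y z)
  le_antisymm x y hxy hyx := F.antisymm x y (by linarith)
  sup := F.sup
  inf := F.inf
  le_sup_left := F.le_sup_left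
  le_sup_right := F.le_sup_right
  sup_le := F.sup_le
  inf_le_left := F.inf_le_left
  inf_le_right := F.inf_le_right
  le_inf a b c := F.le_inf b c a

instance (F : FuzzyRiesz X) : IsOrderedAddMonoid F.Crisp where
  add_le_add_left x y hxy z := hxy.trans_le (F.add_compat x y z hxy)

instance (F : FuzzyRiesz X) : PosSMulMono ℝ F.Crisp where
  smul_le_smul_of_nonneg_left c hc x y hxy := hxy.trans_le (F.smul_compat x y c hc hxy)

theorem genIdeal_eq_solidSpan (F : FuzzyRiesz X) {D : Set X} (hD : D.Nonempty) :
    genIdeal F D = (solidSpan (M := F.Crisp) D : Set F.Crisp) := by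
  ext x
  exact (mem_solidSpan_iff_of_nonempty (M := F.Crisp) hD).symm

theorem IsIdeal.isSolid {F : FuzzyRiesz X} {I : Set X} (hI : F.IsIdeal I) :
    IsSolid (α := F.Crisp) I :=
  fun y hy x hxy => hI.solid x y hxy hy

def IsIdeal.toSubmodule {F : FuzzyRiesz X} {I : Set X} (hI : F.IsIdeal I) :
    Submodule ℝ F.Crisp where
  carrier := I
  zero_mem' := hI.zero_mem
  add_mem' := hI.add_mem
  smul_mem' := hI.smul_mem

theorem IsIdeal.solidSpan_subset {F : FuzzyRiesz X} {I D : Set X} (hI : F.IsIdeal I)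
    (hDI : D ⊆ I) : (solidSpan (M := F.Crisp) D : Set F.Crisp) ⊆ I :=
  solidSpan_le (J := hI.toSubmodule) hI.isSolid hDI

theorem isIdeal_of_isSolid (F : FuzzyRiesz X) (J : Submodule ℝ F.Crisp)
    (hJ : IsSolid (J : Set F.Crisp)) : F.IsIdeal (J : Set F.Crisp) where
  zero_mem := J.zero_mem
  add_mem := J.add_mem
  smul_mem c _ hx := J.smul_mem c hx
  solid _ _ hxy hy := hJ hy hxy

theorem isLeast_genIdeal (F : FuzzyRiesz X) {D : Set X} (hD : D.Nonempty) :
    IsLeast {J | F.IsIdeal J ∧ D ⊆ J} (genIdeal F D) := by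
  rw [F.genIdeal_eq_solidSpan hD]
  exact ⟨⟨F.isIdeal_of_isSolid _ (isSolid_solidSpan _), subset_solidSpan (M := F.Crisp) D⟩,
    fun _ ⟨hJ, hDJ⟩ => hJ.solidSpan_subset hDJ⟩

end FuzzyRiesz

/-- the fuzzy ideal generated by a nonempty set `D` exists, is unique
(`I` is the smallest fuzzy ideal containing `D` iff `I = genIdeal F D`), and is
given by the explicit description `genIdeal F D`. -/
theorem idealGenerated_spec {X : Type*} [AddCommGroup X] [Module ℝ X]
    (F : FuzzyRiesz X) (D : Set X) (hD : D.Nonempty) :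
    (F.IsIdeal (genIdeal F D) ∧ D ⊆ genIdeal F D ∧
      ∀ J : Set X, F.IsIdeal J → D ⊆ J → genIdeal F D ⊆ J) ∧
    (∀ I : Set X, (F.IsIdeal I ∧ D ⊆ I ∧ ∀ J : Set X, F.IsIdeal J → D ⊆ J → I ⊆ J) ↔
      I = genIdeal F D) := by
  have isLeast_iff (I : Set X) :
      (F.IsIdeal I ∧ D ⊆ I ∧ ∀ J : Set X, F.IsIdeal J → D ⊆ J → I ⊆ J) ↔
        IsLeast {J | F.IsIdeal J ∧ D ⊆ J} I :=
    ⟨fun ⟨hI, hDI, hmin⟩ => ⟨⟨hI, hDI⟩, fun J hJ => hmin J hJ.1 hJ.2⟩,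
      fun ⟨⟨hI, hDI⟩, hmin⟩ => ⟨hI, hDI, fun J hJ hDJ => hmin ⟨hJ, hDJ⟩⟩⟩
  have hleast := F.isLeast_genIdeal hD
  exact ⟨(isLeast_iff _).2 hleast,
    fun I => (isLeast_iff I).trans ⟨fun h => h.unique hleast, fun h => h ▸ hleast⟩⟩
end
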